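/- arXiv:1406.7166 — 5 statements merged into one kernel-verified Lean document; each statement's English description precedes it below -/
import Mathlib

section
/- If a nontrivial linearly ordered, bounded, integral, commutative residuated lattice (an MTL-chain) A with more than two elements satisfies x * x = 0 for all x < 1, then A has a coatom, i.e., a greatest element strictly below 1. -/
/-- An MTL-chain: a linearly ordered, bounded, integral, commutative
residuated lattice. -/
structure MTLChain (α : Type*) [LinearOrder α] [Zero α] [One α] where
  zero_le : ∀ x : α, 0 ≤ x
  le_one : ∀ x : α, x ≤ 1
  mul : α → α → α
  imp : α → α → α
  mul_comm : ∀ x y, mul x y = mul y x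
  mul_assoc : ∀ x y z, mul (mul x y) z = mul x (mul y z)
  mul_one : ∀ x, mul x 1 = x
  mul_le_mul : ∀ x y z : α, x ≤ y → mul x z ≤ mul y z
  residuation : ∀ x y z : α, mul x y ≤ z ↔ x ≤ imp y z

/-!
For any `a ∉ {0, 1}` the negation `a ⇒ 0` is the coatom: it lies below `1` because `a ≠ 0`,
and every `x < 1` satisfies `x * a ≤ max x a * max x a = 0`, i.e. `x ≤ a ⇒ 0`.
-/

namespace MTLChain

variable {α : Type*} [LinearOrder α] [Zero α] [One α] (M : MTLChain α)

theorem one_mul (x : α) : M.mul 1 x = x := by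
  rw [M.mul_comm, M.mul_one]

theorem mul_le_mul_of_le_of_le {x x' y y' : α} (hx : x ≤ x') (hy : y ≤ y') :
    M.mul x y ≤ M.mul x' y' :=
  calc M.mul x y ≤ M.mul x' y := M.mul_le_mul x x' y hx
    _ = M.mul y x' := M.mul_comm x' y
    _ ≤ M.mul y' x' := M.mul_le_mul y y' x' hy
    _ = M.mul x' y' := M.mul_comm y' x'

theorem le_imp_zero_iff (x y : α) : x ≤ M.imp y 0 ↔ M.mul x y = 0 := by
  rw [← M.residuation, le_antisymm_iff, and_iff_left (M.zero_le _)]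

theorem imp_zero_lt_one {a : α} (ha : a ≠ 0) : M.imp a 0 < 1 := by
  refine (M.le_one _).lt_of_not_ge fun h => ha ?_
  rwa [M.le_imp_zero_iff, M.one_mul] at h

theorem mul_eq_zero_of_lt_one (hsq : ∀ x : α, x < 1 → M.mul x x = 0) {x y : α}
    (hx : x < 1) (hy : y < 1) : M.mul x y = 0 :=
  le_antisymm
    (calc M.mul x y ≤ M.mul (max x y) (max x y) :=
          M.mul_le_mul_of_le_of_le (le_max_left x y) (le_max_right x y)
      _ = 0 := hsq _ (max_lt hx hy))
    (M.zero_le _)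

end MTLChain

theorem mtlChain_sq_zero_has_coatom_general {α : Type*} [LinearOrder α] [Zero α] [One α]
    (M : MTLChain α)
    (hbig : ∃ a : α, a ≠ 0 ∧ a ≠ 1)
    (hsq : ∀ x : α, x < 1 → M.mul x x = 0) :
    ∃ c : α, c < 1 ∧ ∀ x : α, x < 1 → x ≤ c := by
  obtain ⟨a, ha0, ha1⟩ := hbig
  have ha : a < 1 := (M.le_one a).lt_of_ne ha1
  exact ⟨M.imp a 0, M.imp_zero_lt_one ha0, fun x hx =>
    (M.le_imp_zero_iff x a).2 (M.mul_eq_zero_of_lt_one hsq hx ha)⟩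

/-- A nontrivial MTL-chain with more than two elements in which `x * x = 0`
for all `x < 1` has a coatom. -/
theorem mtlChain_sq_zero_has_coatom {α : Type*} [LinearOrder α] [Zero α] [One α]
    (M : MTLChain α)
    (hnt : (0 : α) ≠ 1)
    (hbig : ∃ a : α, a ≠ 0 ∧ a ≠ 1)
    (hsq : ∀ x : α, x < 1 → M.mul x x = 0) :
    ∃ c : α, c < 1 ∧ ∀ x : α, x < 1 → x ≤ c :=
  mtlChain_sq_zero_has_coatom_general M hbig hsq
end

section
/- In a DP-chain A (an MTL-chain with a coatom c such that x * x = 0 for all x < 1), the operations are uniquely determined: x * y = 0 if x, y < 1 and x * y = min(x,y) otherwise; and x ⇒ y = 1 if x ≤ y, x ⇒ y = c if 1 > x > y, and x ⇒ y = y if x = 1. -/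
/-!
Products of two elements below `1` vanish because `x * y ≤ (max x y)² = 0`, and `1` is the unit, so
`*` is forced. For `⇒`, residuation gives `1 ⇒ y = y` and `x ⇒ y = 1` iff `x ≤ y`; when `y < x < 1`,
the implication is below `1`, hence at most the coatom `c`, while `c * x = 0 ≤ y` forces `c ≤ x ⇒ y`.
-/

/-- A DP-chain: an MTL-chain (linearly ordered, bounded, integral, commutative
residuated lattice) with a coatom, in which `x * x = 0` for all `x < 1`. -/
structure DPChain (α : Type*) [LinearOrder α] [Zero α] [One α] where
  zero_le : ∀ x : α, 0 ≤ x
  le_one : ∀ x : α, x ≤ 1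
  mul : α → α → α
  imp : α → α → α
  mul_comm : ∀ x y, mul x y = mul y x
  mul_assoc : ∀ x y z, mul (mul x y) z = mul x (mul y z)
  mul_one : ∀ x, mul x 1 = x
  mul_le_mul : ∀ x y z : α, x ≤ y → mul x z ≤ mul y z
  residuation : ∀ x y z : α, mul x y ≤ z ↔ x ≤ imp y z
  coatom : α
  coatom_lt_one : coatom < 1
  le_coatom : ∀ x : α, x < 1 → x ≤ coatom
  mul_self_eq_zero : ∀ x : α, x < 1 → mul x x = 0

namespace DPChain

variable {α : Type*} [LinearOrder α] [Zero α] [One α] (M : DPChain α)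

theorem one_mul (x : α) : M.mul 1 x = x := by
  rw [M.mul_comm, M.mul_one]

theorem mul_le_mul_left {x y : α} (z : α) (h : x ≤ y) : M.mul z x ≤ M.mul z y := by
  rw [M.mul_comm z x, M.mul_comm z y]
  exact M.mul_le_mul x y z h

theorem mul_eq_zero_of_lt_one {x y : α} (hx : x < 1) (hy : y < 1) : M.mul x y = 0 := by
  refine le_antisymm ?_ (M.zero_le _)
  rcases le_total x y with hxy | hyx
  · calc M.mul x y ≤ M.mul y y := M.mul_le_mul x y y hxy
      _ = 0 := M.mul_self_eq_zero y hy
  · calc M.mul x y ≤ M.mul x x := M.mul_le_mul_left x hyx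
      _ = 0 := M.mul_self_eq_zero x hx

theorem mul_eq_ite (x y : α) : M.mul x y = if x < 1 ∧ y < 1 then 0 else min x y := by
  split_ifs with h
  · exact M.mul_eq_zero_of_lt_one h.1 h.2
  · rcases (M.le_one x).lt_or_eq with hx | rfl
    · have hy : y = 1 := (M.le_one y).antisymm (not_lt.mp fun hy => h ⟨hx, hy⟩)
      rw [hy, M.mul_one, min_eq_left (M.le_one x)]
    · rw [M.one_mul, min_eq_right (M.le_one y)]

theorem one_le_imp_iff {x y : α} : 1 ≤ M.imp x y ↔ x ≤ y := by
  rw [← M.residuation, M.one_mul]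

theorem imp_eq_one_of_le {x y : α} (h : x ≤ y) : M.imp x y = 1 :=
  (M.le_one _).antisymm (M.one_le_imp_iff.mpr h)

theorem one_imp (y : α) : M.imp 1 y = y := by
  apply le_antisymm
  · simpa only [M.mul_one] using (M.residuation (M.imp 1 y) 1 y).mpr le_rfl
  · rw [← M.residuation, M.mul_one]

theorem imp_eq_coatom {x y : α} (hx : x < 1) (hxy : ¬x ≤ y) : M.imp x y = M.coatom := by
  apply le_antisymm
  · exact M.le_coatom _ (not_le.mp (mt M.one_le_imp_iff.mp hxy))
  · rw [← M.residuation, M.mul_eq_zero_of_lt_one M.coatom_lt_one hx]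
    exact M.zero_le y

theorem imp_eq_ite (x y : α) :
    M.imp x y = if x ≤ y then 1 else if x = 1 then y else M.coatom := by
  split_ifs with hxy hx
  · exact M.imp_eq_one_of_le hxy
  · rw [hx, M.one_imp]
  · exact M.imp_eq_coatom ((M.le_one x).lt_of_ne hx) hxy

end DPChain

/-- In a DP-chain the operations are uniquely determined by the order. -/
theorem dpChain_operations {α : Type*} [LinearOrder α] [Zero α] [One α]
    (M : DPChain α) :
    (∀ x y : α, M.mul x y = if x < 1 ∧ y < 1 then 0 else min x y) ∧
    (∀ x y : α, M.imp x y =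
      if x ≤ y then 1 else if x = 1 then y else M.coatom) :=
  ⟨M.mul_eq_ite, M.imp_eq_ite⟩
end

section
/- Every countable DP-chain embeds into [0,1]^c for any fixed c ∈ (0,1): there is an injective homomorphism preserving 0, 1, order, *, and ⇒. -/
/-- The universe of the canonical algebra `[0,1]^c`. -/
def dpSet (c : ℝ) : Set ℝ := Set.Icc 0 c ∪ {1}

/-- The drastic product on `ℝ` (restricted to `[0,1]^c`). -/
noncomputable def dpMul (x y : ℝ) : ℝ := if x < 1 ∧ y < 1 then 0 else min x y

/-- The residuum of the drastic product on `[0,1]^c`. -/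
noncomputable def dpImp (c x y : ℝ) : ℝ := if x ≤ y then 1 else if x = 1 then y else c

/-!
In a DP-chain the operations are determined by the order and three constants: `x * y = 0` and
`x ⇒ y` is the coatom whenever `y < x < 1`. Hence every strictly monotone map into `ℝ` sending
`0`, the coatom and `1` to `0`, `c` and `1` is a homomorphism into `[0,1]^c`. Such a map is
obtained by embedding the countable chain into the dense order `(0, c)` and then redefining it
at the three distinguished elements.
-/

section Arithmetic

variable {α : Type*} [LinearOrder α] [Zero α] [One α]

theorem DPChain.zero_lt_one (B : DPChain α) : (0 : α) < 1 :=
  (B.zero_le B.coatom).trans_lt B.coatom_lt_one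

theorem DPChain.lt_one_of_ne (B : DPChain α) {x : α} (hx : x ≠ 1) : x < 1 :=
  (B.le_one x).lt_of_ne hx

variable (B : DPChain α)

theorem DPChain.one_mul_s11 (x : α) : B.mul 1 x = x := by
  rw [B.mul_comm, B.mul_one]

theorem DPChain.mul_eq_zero_of_lt_one_s11 {x y : α} (hx : x < 1) (hy : y < 1) :
    B.mul x y = 0 := by
  refine le_antisymm ?_ (B.zero_le _)
  rcases le_total x y with hxy | hyx
  · simpa [B.mul_self_eq_zero y hy] using B.mul_le_mul x y y hxy
  · simpa [B.mul_comm x y, B.mul_self_eq_zero x hx] using B.mul_le_mul y x x hyx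

theorem DPChain.imp_eq_one_of_le_s11 {x y : α} (h : x ≤ y) : B.imp x y = 1 :=
  le_antisymm (B.le_one _) ((B.residuation 1 x y).mp (by rwa [B.one_mul_s11]))

theorem DPChain.one_imp_s11 (y : α) : B.imp 1 y = y := by
  refine le_antisymm ?_ ((B.residuation y 1 y).mp (by rw [B.mul_one]))
  simpa [B.mul_one] using (B.residuation (B.imp 1 y) 1 y).mpr le_rfl

theorem DPChain.imp_eq_coatom_s11 {x y : α} (hyx : y < x) (hx : x < 1) :
    B.imp x y = B.coatom := by
  have hle : B.coatom ≤ B.imp x y := (B.residuation _ x y).mp <| by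
    simpa [B.mul_eq_zero_of_lt_one_s11 B.coatom_lt_one hx] using B.zero_le y
  have hlt : B.imp x y < 1 := by
    refine B.lt_one_of_ne fun h => hyx.not_ge ?_
    simpa [B.one_mul_s11] using (B.residuation 1 x y).mpr h.ge
  exact le_antisymm (B.le_coatom _ hlt) hle

end Arithmetic

section Homomorphisms

variable {α : Type*} [LinearOrder α] [Zero α] [One α] (B : DPChain α) {f : α → ℝ}

theorem DPChain.map_mul_eq_dpMul (hf : StrictMono f) (hf0 : f 0 = 0) (hf1 : f 1 = 1)
    (x y : α) : f (B.mul x y) = dpMul (f x) (f y) := by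
  have hle : ∀ z, f z ≤ 1 := fun z => hf1 ▸ hf.monotone (B.le_one z)
  rcases (B.le_one x).lt_or_eq with hx | rfl
  · rcases (B.le_one y).lt_or_eq with hy | rfl
    · rw [B.mul_eq_zero_of_lt_one_s11 hx hy, hf0, dpMul, if_pos ⟨hf1 ▸ hf hx, hf1 ▸ hf hy⟩]
    · simp [dpMul, B.mul_one, hf1, hle x]
  · simp [dpMul, B.one_mul_s11, hf1, hle y]

theorem DPChain.map_imp_eq_dpImp {c : ℝ} (hf : StrictMono f) (hf1 : f 1 = 1)
    (hco : B.coatom ≠ 0 → f B.coatom = c) (x y : α) :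
    f (B.imp x y) = dpImp c (f x) (f y) := by
  rcases le_or_gt x y with hxy | hyx
  · rw [B.imp_eq_one_of_le_s11 hxy, hf1, dpImp, if_pos (hf.monotone hxy)]
  rcases (B.le_one x).lt_or_eq with hx | rfl
  · have hco0 : B.coatom ≠ 0 :=
      ((B.zero_le y).trans_lt (hyx.trans_le (B.le_coatom x hx))).ne'
    rw [B.imp_eq_coatom_s11 hyx hx, dpImp, if_neg (hf hyx).not_ge, if_neg (hf1 ▸ hf hx).ne,
      hco hco0]
  · rw [B.one_imp_s11, dpImp, if_neg (hf hyx).not_ge, if_pos hf1]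

end Homomorphisms

section Glue

variable {α : Type*} [LinearOrder α] [Zero α] [One α] (B : DPChain α)

noncomputable def DPChain.glue (c : ℝ) (g : α → ℝ) : α → ℝ := fun x =>
  if x = 0 then 0 else if x = 1 then 1 else if x = B.coatom then c else g x

variable {c : ℝ} {g : α → ℝ}

theorem DPChain.glue_zero : B.glue c g 0 = 0 := by simp [DPChain.glue]

theorem DPChain.glue_one : B.glue c g 1 = 1 := by
  simp [DPChain.glue, B.zero_lt_one.ne']

theorem DPChain.glue_coatom (h : B.coatom ≠ 0) : B.glue c g B.coatom = c := by
  simp [DPChain.glue, h, B.coatom_lt_one.ne]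

theorem DPChain.glue_pos (hg0 : ∀ x, 0 < g x) (hgc : ∀ x, g x < c) {x : α} (hx : x ≠ 0) :
    0 < B.glue c g x := by
  have := (hg0 0).trans (hgc 0)
  simp only [DPChain.glue, if_neg hx]
  split_ifs <;> first | exact one_pos | assumption | exact hg0 x

theorem DPChain.glue_le (hg0 : ∀ x, 0 < g x) (hgc : ∀ x, g x < c) {x : α} (hx : x ≠ 1) :
    B.glue c g x ≤ c := by
  have := (hg0 0).trans (hgc 0)
  unfold DPChain.glue
  split_ifs <;> first | rfl | positivity | exact (hgc x).le

theorem DPChain.glue_mem_dpSet (hg0 : ∀ x, 0 < g x) (hgc : ∀ x, g x < c) (x : α) :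
    B.glue c g x ∈ dpSet c := by
  by_cases hx : x = 1
  · exact Or.inr (by simp [hx, B.glue_one])
  refine Or.inl ⟨?_, B.glue_le hg0 hgc hx⟩
  rcases eq_or_ne x 0 with rfl | hx0
  · exact B.glue_zero.ge
  · exact (B.glue_pos hg0 hgc hx0).le

theorem DPChain.glue_strictMono (hg0 : ∀ x, 0 < g x) (hgc : ∀ x, g x < c) (hg : StrictMono g)
    (hc : c < 1) : StrictMono (B.glue c g) := by
  intro a b hab
  have hb0 : b ≠ 0 := ((B.zero_le a).trans_lt hab).ne'
  have ha1 : a ≠ 1 := (hab.trans_le (B.le_one b)).ne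
  by_cases ha0 : a = 0
  · simpa [ha0, B.glue_zero] using B.glue_pos hg0 hgc hb0
  by_cases hb1 : b = 1
  · simpa [hb1, B.glue_one] using (B.glue_le hg0 hgc ha1).trans_lt hc
  have hbco : b ≤ B.coatom := B.le_coatom b (B.lt_one_of_ne hb1)
  have haco : a ≠ B.coatom := (hab.trans_le hbco).ne
  simp only [DPChain.glue, if_neg ha0, if_neg ha1, if_neg haco, if_neg hb0, if_neg hb1]
  split_ifs
  · exact hgc a
  · exact hg hab

end Glue

/-- Every countable DP-chain embeds into `[0,1]^c`, for any `c ∈ (0,1)`. -/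
theorem countable_dpChain_embeds {β : Type*} [LinearOrder β] [Zero β] [One β]
    [Countable β] (B : DPChain β) (c : ℝ) (hc : c ∈ Set.Ioo (0:ℝ) 1) :
    ∃ f : β → ℝ,
      (∀ x : β, f x ∈ dpSet c) ∧
      Function.Injective f ∧
      f 0 = 0 ∧ f 1 = 1 ∧
      StrictMono f ∧
      (∀ x y : β, f (B.mul x y) = dpMul (f x) (f y)) ∧
      (∀ x y : β, f (B.imp x y) = dpImp c (f x) (f y)) := by
  have : Nontrivial (Set.Ioo 0 c) := (Set.Ioo_infinite hc.1).nontrivial.coe_sort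
  obtain ⟨g⟩ := Order.embedding_from_countable_to_dense β (Set.Ioo 0 c)
  have hg0 : ∀ x, 0 < (g x : ℝ) := fun x => (g x).2.1
  have hgc : ∀ x, (g x : ℝ) < c := fun x => (g x).2.2
  have hf : StrictMono (B.glue c (g ·)) :=
    B.glue_strictMono hg0 hgc ((Subtype.strictMono_coe _).comp g.strictMono) hc.2
  exact ⟨B.glue c (g ·), B.glue_mem_dpSet hg0 hgc, hf.injective, B.glue_zero, B.glue_one, hf,
    B.map_mul_eq_dpMul hf B.glue_zero B.glue_one, B.map_imp_eq_dpImp hf B.glue_one B.glue_coatom⟩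
end

section
/- Every DP-chain is simple: any congruence of a DP-chain (compatible with *, ⇒, and the lattice operations) is either the identity relation or the total relation. -/
/-!
If a congruence identifies `x < y`, then it identifies `y ⇒ x` with `y ⇒ y = 1`. Since
`y ⇒ x < 1`, its square is `0`, so squaring identifies `0` with `1`; multiplying by an
arbitrary `u` then identifies `0 = u * 0` with `u = u * 1`, and the congruence is total.
-/

namespace DPChain

variable {α : Type*} [LinearOrder α] [Zero α] [One α] (M : DPChain α)

theorem mul_zero (x : α) : M.mul x 0 = 0 := by
  refine le_antisymm ?_ (M.zero_le _)
  calc M.mul x 0 ≤ M.mul 1 0 := M.mul_le_mul _ _ _ (M.le_one x)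
    _ = 0 := M.one_mul 0

theorem imp_self (x : α) : M.imp x x = 1 :=
  le_antisymm (M.le_one _) ((M.residuation 1 x x).mp (M.one_mul x).le)

theorem imp_lt_one_of_lt {x y : α} (hxy : x < y) : M.imp y x < 1 := by
  refine lt_of_not_ge fun h => hxy.not_ge ?_
  simpa only [M.one_mul] using (M.residuation 1 y x).mpr h

variable {M} {r : α → α → Prop} (hequiv : Equivalence r)
  (hmul : ∀ a b c d : α, r a b → r c d → r (M.mul a c) (M.mul b d))

include hequiv hmul in
theorem rel_of_rel_zero_one (h01 : r 0 1) (u v : α) : r u v := by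
  have hzero (u : α) : r 0 u := by
    simpa only [M.mul_zero, M.mul_one] using hmul _ _ _ _ (hequiv.refl u) h01
  exact hequiv.trans (hequiv.symm (hzero u)) (hzero v)

include hequiv hmul in
theorem rel_zero_one_of_rel_of_lt
    (himp : ∀ a b c d : α, r a b → r c d → r (M.imp a c) (M.imp b d))
    {x y : α} (hxy : x < y) (hr : r x y) : r 0 1 := by
  have hc : r (M.imp y x) 1 := by
    simpa only [M.imp_self] using himp _ _ _ _ (hequiv.refl y) hr
  simpa only [M.mul_self_eq_zero _ (M.imp_lt_one_of_lt hxy), M.mul_one] using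
    hmul _ _ _ _ hc hc

end DPChain

theorem dpChain_simple_general {α : Type*} [LinearOrder α] [Zero α] [One α]
    (M : DPChain α) (r : α → α → Prop)
    (hequiv : Equivalence r)
    (hmul : ∀ a b c d : α, r a b → r c d → r (M.mul a c) (M.mul b d))
    (himp : ∀ a b c d : α, r a b → r c d → r (M.imp a c) (M.imp b d)) :
    (∀ a b : α, r a b → a = b) ∨ (∀ a b : α, r a b) := by
  refine or_iff_not_imp_left.mpr fun hid => ?_
  push Not at hid
  obtain ⟨a, b, hab, hne⟩ := hid
  refine DPChain.rel_of_rel_zero_one hequiv hmul ?_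
  rcases hne.lt_or_gt with hlt | hgt
  · exact DPChain.rel_zero_one_of_rel_of_lt hequiv hmul himp hlt hab
  · exact DPChain.rel_zero_one_of_rel_of_lt hequiv hmul himp hgt (hequiv.symm hab)

/-- Every DP-chain is simple: every congruence is the identity or the total
relation. -/
theorem dpChain_simple {α : Type*} [LinearOrder α] [Zero α] [One α]
    (M : DPChain α) (r : α → α → Prop)
    (hequiv : Equivalence r)
    (hmul : ∀ a b c d : α, r a b → r c d → r (M.mul a c) (M.mul b d))
    (himp : ∀ a b c d : α, r a b → r c d → r (M.imp a c) (M.imp b d))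
    (hmin : ∀ a b c d : α, r a b → r c d → r (min a c) (min b d))
    (hmax : ∀ a b c d : α, r a b → r c d → r (max a c) (max b d)) :
    (∀ a b : α, r a b → a = b) ∨ (∀ a b : α, r a b) :=
  dpChain_simple_general M r hequiv hmul himp
end

section
/- Let a_h^(k) for h ≥ 3 be defined by a_h^(k) = Σ_{i=0}^{h-2} (-1)^i C(h-2, i) (h+1-i)^k, and set a_1^(k) = 2^k, a_2^(k) = 3^k - 2^k. Then these sequences satisfy the recurrences a_1^(k+1) = 2 a_1^(k), a_2^(k+1) = a_1^(k) + 3 a_2^(k), a_3^(k+1) = a_1^(k) + a_2^(k) + 4 a_3^(k), and a_h^(k+1) = (h-2) a_{h-1}^(k) + (h+1) a_h^(k) for h > 3, with the appropriate initial conditions at k = 1 (a_1^(1)=2, a_2^(1)=1, a_3^(1)=1, a_h^(1)=0 for h>3). -/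
/-!
For `h ≥ 3`, `a_h^(k)` is the `(h - 2)`-th backward difference of `x ↦ x ^ k` at `h + 1`.
For the difference of order `m + 1` at `c`, splitting
`(c - i) ^ (k + 1) = c (c - i) ^ k - i (c - i) ^ k` and absorbing the factor `i` by
`i C(m + 1, i) = (m + 1) C(m, i - 1)` turns the difference of `x ^ (k + 1)` into `c` times the
same difference of `x ^ k` plus `m + 1` times a difference of one order less at `c - 1`; this is
the recurrence. The initial values follow because a difference of positive order kills constants.
-/

open Finset

/-- The multiplicity of the dual chain `h` in the free `k`-generated
DP-algebra: `a 1 k = 2^k`, `a 2 k = 3^k - 2^k`, and for `h ≥ 3`,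
`a h k = ∑_{i=0}^{h-2} (-1)^i C(h-2,i) (h+1-i)^k`. -/
def dpCoeff (h k : ℕ) : ℤ :=
  if h = 1 then 2 ^ k
  else if h = 2 then 3 ^ k - 2 ^ k
  else ∑ i ∈ Finset.range (h - 1), (-1 : ℤ) ^ i * (Nat.choose (h - 2) i) * ((h : ℤ) + 1 - i) ^ k

section BackwardDiffPow

variable {R : Type*} [CommRing R]

def backwardDiffPow (m : ℕ) (c : R) (k : ℕ) : R :=
  ∑ i ∈ range (m + 1), (-1) ^ i * (m.choose i : R) * (c - i) ^ k

theorem backwardDiffPow_succ_zero (m : ℕ) (c : R) : backwardDiffPow (m + 1) c 0 = 0 := by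
  have hsum := congrArg (Int.cast : ℤ → R) (Int.alternating_sum_range_choose_of_ne m.succ_ne_zero)
  push_cast at hsum
  simpa [backwardDiffPow] using hsum

theorem backwardDiffPow_succ_succ (m : ℕ) (c : R) (k : ℕ) :
    backwardDiffPow (m + 1) c (k + 1) =
      c * backwardDiffPow (m + 1) c k + (m + 1) * backwardDiffPow m (c - 1) k := by
  have split : backwardDiffPow (m + 1) c (k + 1) = c * backwardDiffPow (m + 1) c k -
      ∑ i ∈ range (m + 2), (i : R) * ((-1) ^ i * ((m + 1).choose i : R) * (c - i) ^ k) := by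
    rw [backwardDiffPow, backwardDiffPow, mul_sum, ← sum_sub_distrib]
    exact sum_congr rfl fun i _ => by ring
  have absorb : ∑ i ∈ range (m + 2), (i : R) * ((-1) ^ i * ((m + 1).choose i : R) * (c - i) ^ k) =
      -((m + 1) * backwardDiffPow m (c - 1) k) := by
    rw [sum_range_succ', backwardDiffPow, mul_sum, ← sum_neg_distrib]
    simp only [Nat.cast_zero, zero_mul, add_zero]
    refine sum_congr rfl fun j _ => ?_
    have hchoose := congrArg (Nat.cast : ℕ → R) (Nat.add_one_mul_choose_eq m j)
    push_cast at hchoose ⊢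
    linear_combination ((-1) ^ j * (c - 1 - j) ^ k) * hchoose
  rw [split, absorb]
  ring

end BackwardDiffPow

theorem dpCoeff_one (k : ℕ) : dpCoeff 1 k = 2 ^ k := rfl

theorem dpCoeff_two (k : ℕ) : dpCoeff 2 k = 3 ^ k - 2 ^ k := rfl

theorem dpCoeff_add_three (m k : ℕ) :
    dpCoeff (m + 3) k = backwardDiffPow (m + 1) ((m : ℤ) + 4) k := by
  rw [dpCoeff, if_neg (by omega), if_neg (by omega), backwardDiffPow]
  refine sum_congr (by congr 1) fun i _ => ?_
  rw [show m + 3 - 2 = m + 1 by omega]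
  push_cast
  ring_nf

theorem dpCoeff_three (k : ℕ) : dpCoeff 3 k = 4 ^ k - 3 ^ k := by
  rw [dpCoeff_add_three 0, backwardDiffPow]
  norm_num [sum_range_succ, sub_eq_add_neg]

theorem dpCoeff_add_four_one (m : ℕ) : dpCoeff (m + 4) 1 = 0 := by
  rw [dpCoeff_add_three (m + 1), backwardDiffPow_succ_succ, backwardDiffPow_succ_zero,
    backwardDiffPow_succ_zero]
  ring

theorem dpCoeff_add_four_succ (m k : ℕ) :
    dpCoeff (m + 4) (k + 1) = (m + 2) * dpCoeff (m + 3) k + (m + 5) * dpCoeff (m + 4) k := by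
  have hc : ((m + 1 : ℕ) : ℤ) + 4 - 1 = (m : ℤ) + 4 := by push_cast; ring
  rw [dpCoeff_add_three (m + 1), dpCoeff_add_three (m + 1), dpCoeff_add_three m,
    backwardDiffPow_succ_succ, hc]
  push_cast
  ring

/-- The coefficients satisfy the stated recurrences and initial conditions. -/
theorem dpCoeff_recurrences :
    (dpCoeff 1 1 = 2 ∧ dpCoeff 2 1 = 1 ∧ dpCoeff 3 1 = 1 ∧
      ∀ h : ℕ, h > 3 → dpCoeff h 1 = 0) ∧
    ∀ k : ℕ, 1 ≤ k →
      dpCoeff 1 (k + 1) = 2 * dpCoeff 1 k ∧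
      dpCoeff 2 (k + 1) = dpCoeff 1 k + 3 * dpCoeff 2 k ∧
      dpCoeff 3 (k + 1) = dpCoeff 1 k + dpCoeff 2 k + 4 * dpCoeff 3 k ∧
      ∀ h : ℕ, h > 3 →
        dpCoeff h (k + 1) = (h - 2 : ℤ) * dpCoeff (h - 1) k + (h + 1 : ℤ) * dpCoeff h k := by
  refine ⟨⟨rfl, rfl, by rw [dpCoeff_three]; norm_num, fun h hh => ?_⟩, fun k _ => ⟨?_, ?_, ?_, ?_⟩⟩
  · obtain ⟨m, rfl⟩ : ∃ m, h = m + 4 := ⟨h - 4, by omega⟩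
    exact dpCoeff_add_four_one m
  · rw [dpCoeff_one, dpCoeff_one, pow_succ, mul_comm]
  · rw [dpCoeff_one, dpCoeff_two, dpCoeff_two]
    ring
  · rw [dpCoeff_one, dpCoeff_two, dpCoeff_three, dpCoeff_three]
    ring
  · intro h hh
    obtain ⟨m, rfl⟩ : ∃ m, h = m + 4 := ⟨h - 4, by omega⟩
    rw [dpCoeff_add_four_succ, show m + 4 - 1 = m + 3 by omega]
    push_cast
    ring
end
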